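/- arXiv:1010.4245 — 6 statements merged into one kernel-verified Lean document; each statement's English description precedes it below -/
import Mathlib

section
/- Let a, b, z be positive integers and let α be a real number with 0 ≤ α ≤ ab/(a+b)^2 such that Λ₁ = za/(a+b) - α(a+b) and Λ₂ = zb/(a+b) + α(a+b) are nonnegative integers. Then b·ρ_a(Λ₁)(a - ρ_a(Λ₁)) + a·ρ_b(Λ₂)(b - ρ_b(Λ₂)) ≥ α(a+b)(ab - α(a+b)^2). -/
/-! Write `Λ₁ = q₁a + r₁`, `Λ₂ = q₂b + r₂`. Then `T := aΛ₂ - bΛ₁ = α(a+b)²` lies in `[0, ab]`,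
and the right-hand side of the claim is `T(ab - T)/(a+b)`. Since `T ≡ ar₂ - br₁ (mod ab)` and
`|ar₂ - br₁| < ab`, either `T = ar₂ - br₁` or `T = ab - (br₁ - ar₂)`; in both cases the claim is
`T(ab - T) ≤ (a+b)(br₁(a-r₁) + ar₂(b-r₂))`, whose defect is an explicit sum of nonnegative terms. -/

theorem Int.eq_or_eq_add_of_modEq {m t d : ℤ} (h : t ≡ d [ZMOD m]) (ht₀ : 0 ≤ t) (ht : t ≤ m)
    (hd₀ : -m < d) (hd : d < m) : t = d ∨ t = m + d := by
  obtain ⟨k, hk⟩ := h.symm.dvd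
  have hm : 0 < m := by omega
  have hk₀ : 0 ≤ k := by
    by_contra! hk'
    nlinarith
  have hk₁ : k ≤ 1 := by
    by_contra! hk'
    nlinarith
  interval_cases k <;> [left; right] <;> linarith

theorem add_mul_residue_sum_sub_gap {R : Type*} [CommRing R] (a b r s : R) :
    (a + b) * (b * r * (a - r) + a * s * (b - s)) - (a * s - b * r) * (a * b - (a * s - b * r))
      = a * b * (r * (a - r) + s * (b - s) + 2 * r * (b - s)) := by
  ring

section Residues

variable {R : Type*} [CommRing R] [PartialOrder R] [IsOrderedRing R] {a b r s : R}

theorem gap_mul_le_add_mul_residue_sum (hr₀ : 0 ≤ r) (hr : r ≤ a) (hs₀ : 0 ≤ s) (hs : s ≤ b) :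
    (a * s - b * r) * (a * b - (a * s - b * r)) ≤ (a + b) * (b * r * (a - r) + a * s * (b - s)) := by
  rw [← sub_nonneg, add_mul_residue_sum_sub_gap]
  have hab : 0 ≤ a * b := mul_nonneg (hr₀.trans hr) (hs₀.trans hs)
  have hr' : 0 ≤ r * (a - r) := mul_nonneg hr₀ (sub_nonneg.2 hr)
  have hs' : 0 ≤ s * (b - s) := mul_nonneg hs₀ (sub_nonneg.2 hs)
  have hrs : 0 ≤ 2 * r * (b - s) := mul_nonneg (mul_nonneg zero_le_two hr₀) (sub_nonneg.2 hs)
  exact mul_nonneg hab (add_nonneg (add_nonneg hr' hs') hrs)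

theorem mul_sub_le_add_mul_residue_sum {t : R} (hr₀ : 0 ≤ r) (hr : r ≤ a) (hs₀ : 0 ≤ s)
    (hs : s ≤ b) (ht : t = a * s - b * r ∨ t = a * b + (a * s - b * r)) :
    t * (a * b - t) ≤ (a + b) * (b * r * (a - r) + a * s * (b - s)) := by
  rcases ht with rfl | rfl
  · exact gap_mul_le_add_mul_residue_sum hr₀ hr hs₀ hs
  · -- `ab + (as - br) = ab - (br - as)`: the first case with the roles of `(a, r)` and `(b, s)` swapped
    calc (a * b + (a * s - b * r)) * (a * b - (a * b + (a * s - b * r)))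
        = (b * r - a * s) * (b * a - (b * r - a * s)) := by ring
      _ ≤ (b + a) * (a * s * (b - s) + b * r * (a - r)) :=
          gap_mul_le_add_mul_residue_sum hs₀ hs hr₀ hr
      _ = (a + b) * (b * r * (a - r) + a * s * (b - s)) := by ring

end Residues

theorem stmt_1_general (a b z : ℕ) (ha : 0 < a) (hb : 0 < b)
    (α : ℝ) (hα0 : 0 ≤ α) (hα1 : α ≤ ((a : ℝ) * b) / ((a : ℝ) + b) ^ 2)
    (Λ₁ Λ₂ : ℕ)
    (h1 : (Λ₁ : ℝ) = (z : ℝ) * a / ((a : ℝ) + b) - α * ((a : ℝ) + b))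
    (h2 : (Λ₂ : ℝ) = (z : ℝ) * b / ((a : ℝ) + b) + α * ((a : ℝ) + b)) :
    (b : ℝ) * ((Λ₁ % a : ℕ) : ℝ) * ((a : ℝ) - ((Λ₁ % a : ℕ) : ℝ))
      + (a : ℝ) * ((Λ₂ % b : ℕ) : ℝ) * ((b : ℝ) - ((Λ₂ % b : ℕ) : ℝ))
      ≥ α * ((a : ℝ) + b) * ((a : ℝ) * b - α * ((a : ℝ) + b) ^ 2) := by
  have hab : (0 : ℝ) < a + b := by positivity
  set T : ℤ := a * Λ₂ - b * Λ₁
  have hT : (T : ℝ) = α * (a + b) ^ 2 := by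
    push_cast [T, h1, h2]
    field_simp
    ring
  have hT₀ : 0 ≤ T := by exact_mod_cast hT ▸ (by positivity : 0 ≤ α * ((a : ℝ) + b) ^ 2)
  have hT₁ : T ≤ a * b := by
    have := (le_div_iff₀ (by positivity)).1 hα1
    exact_mod_cast hT ▸ this
  have hr₁ : ((Λ₁ % a : ℕ) : ℤ) < a := by exact_mod_cast Nat.mod_lt _ ha
  have hr₂ : ((Λ₂ % b : ℕ) : ℤ) < b := by exact_mod_cast Nat.mod_lt _ hb
  have hmod : T ≡ a * (Λ₂ % b : ℕ) - b * (Λ₁ % a : ℕ) [ZMOD a * b] := by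
    have h₁ := (Int.natCast_modEq_iff.2 (Nat.mod_modEq Λ₁ a)).symm.mul_left' (c := b)
    have h₂ := (Int.natCast_modEq_iff.2 (Nat.mod_modEq Λ₂ b)).symm.mul_left' (c := a)
    rw [mul_comm (b : ℤ)] at h₁
    exact h₂.sub h₁
  have hcases := Int.eq_or_eq_add_of_modEq hmod hT₀ hT₁ (by nlinarith) (by nlinarith)
  have hgap := mul_sub_le_add_mul_residue_sum (a := (a : ℝ)) (b := b) (t := T)
    (Nat.cast_nonneg (Λ₁ % a)) (by exact_mod_cast hr₁.le) (Nat.cast_nonneg (Λ₂ % b))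
    (by exact_mod_cast hr₂.le) (by exact_mod_cast hcases)
  calc α * (a + b) * (a * b - α * (a + b) ^ 2) = T * (a * b - T) / (a + b) := by
        rw [hT]; field_simp
    _ ≤ _ := (div_le_iff₀' hab).2 hgap

/-- Lemma 4.2. -/
theorem stmt_1 (a b z : ℕ) (ha : 0 < a) (hb : 0 < b) (hz : 0 < z)
    (α : ℝ) (hα0 : 0 ≤ α) (hα1 : α ≤ ((a : ℝ) * b) / ((a : ℝ) + b) ^ 2)
    (Λ₁ Λ₂ : ℕ)
    (h1 : (Λ₁ : ℝ) = (z : ℝ) * a / ((a : ℝ) + b) - α * ((a : ℝ) + b))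
    (h2 : (Λ₂ : ℝ) = (z : ℝ) * b / ((a : ℝ) + b) + α * ((a : ℝ) + b)) :
    (b : ℝ) * ((Λ₁ % a : ℕ) : ℝ) * ((a : ℝ) - ((Λ₁ % a : ℕ) : ℝ))
      + (a : ℝ) * ((Λ₂ % b : ℕ) : ℝ) * ((b : ℝ) - ((Λ₂ % b : ℕ) : ℝ))
      ≥ α * ((a : ℝ) + b) * ((a : ℝ) * b - α * ((a : ℝ) + b) ^ 2) :=
  stmt_1_general a b z ha hb α hα0 hα1 Λ₁ Λ₂ h1 h2
end

section
/- Let k ≥ 1 be an integer and let λ = (λ_1 ≥ ... ≥ λ_l > 0) be a partition of N (N ≥ 2) with λ_1 > 1. Then Σ_i λ_i(λ_i - k)/k + R_k(λ)/k + N - l > Σ_i λ_i(λ_i - 1)/(k+1), where R_k(λ) = Σ_i ρ_k(λ_i)(k - ρ_k(λ_i)). -/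
open Finset BigOperators

lemma intkey_le (k q r : ℤ) (hk : 1 ≤ k) (hr0 : 0 ≤ r) (hrk : r < k) (hq : 0 ≤ q)
    (ha : 1 ≤ k*q + r) :
    (k*q+r)*((k*q+r)-1) ≤ (k+1)*(k*q^2+2*q*r+r-1) := by
  rcases eq_or_lt_of_le hq with h | h
  · subst h
    nlinarith [mul_nonneg (by linarith : (0:ℤ) ≤ k - r) (by linarith : (0:ℤ) ≤ r - 1)]
  · have hq1 : 1 ≤ q := h
    nlinarith [mul_nonneg hr0 (by linarith : (0:ℤ) ≤ k - r),
      mul_nonneg (mul_nonneg hq hq) (by linarith : (0:ℤ) ≤ k)]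

lemma intkey_lt (k q r : ℤ) (hk : 1 ≤ k) (hr0 : 0 ≤ r) (hrk : r < k) (hq : 0 ≤ q)
    (ha : 2 ≤ k*q + r) :
    (k*q+r)*((k*q+r)-1) < (k+1)*(k*q^2+2*q*r+r-1) := by
  rcases eq_or_lt_of_le hq with h | h
  · subst h
    nlinarith [mul_nonneg (by linarith : (0:ℤ) ≤ k - r - 1) (by linarith : (0:ℤ) ≤ r - 1)]
  · have hq1 : 1 ≤ q := h
    rcases eq_or_lt_of_le hr0 with hr | hr
    · nlinarith [mul_pos (by linarith : (0:ℤ) < k) (by linarith : (0:ℤ) < q)]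
    · nlinarith [mul_nonneg hr0 (by linarith : (0:ℤ) ≤ k - r),
        mul_pos hr (by linarith : (0:ℤ) < q)]

lemma realkey_le (k a : ℕ) (hk : 1 ≤ k) (ha : 1 ≤ a) :
    (a:ℝ) * ((a:ℝ) - 1) / ((k:ℝ) + 1)
      ≤ (a:ℝ) * ((a:ℝ) - (k:ℝ)) / k + ((a % k : ℕ):ℝ) * ((k:ℝ) - ((a % k : ℕ):ℝ)) / k
        + ((a:ℝ) - 1) := by
  have hk0 : (0:ℝ) < k := by exact_mod_cast hk
  have hk1 : (0:ℝ) < (k:ℝ) + 1 := by linarith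
  set q : ℕ := a / k with hq
  set r : ℕ := a % k with hr
  have hqr : k * q + r = a := Nat.div_add_mod a k
  have hrk : r < k := Nat.mod_lt _ hk
  have key := intkey_le (k:ℤ) (q:ℤ) (r:ℤ) (by exact_mod_cast hk) (by positivity)
    (by exact_mod_cast hrk) (by positivity)
    (by have : 1 ≤ k*q+r := hqr ▸ ha; exact_mod_cast this)
  have keyR : ((k:ℝ)*q+r)*(((k:ℝ)*q+r)-1) ≤ ((k:ℝ)+1)*((k:ℝ)*(q:ℝ)^2+2*q*r+r-1) := by
    exact_mod_cast key
  have haR : (a:ℝ) = (k:ℝ)*q + r := by exact_mod_cast hqr.symm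
  rw [div_le_iff₀ hk1]
  have hX : (a:ℝ) * ((a:ℝ) - (k:ℝ)) / k + ((a % k : ℕ):ℝ) * ((k:ℝ) - ((a % k : ℕ):ℝ)) / k
      + ((a:ℝ) - 1)
      = ((a:ℝ) * ((a:ℝ) - (k:ℝ)) + (r:ℝ) * ((k:ℝ) - (r:ℝ)) + ((a:ℝ) - 1) * k) / k := by
    rw [← hr]; field_simp
  rw [hX, div_mul_eq_mul_div, le_div_iff₀ hk0, haR]
  nlinarith [mul_nonneg hk0.le (sub_nonneg.mpr keyR)]


lemma realkey_lt (k a : ℕ) (hk : 1 ≤ k) (ha : 2 ≤ a) :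
    (a:ℝ) * ((a:ℝ) - 1) / ((k:ℝ) + 1)
      < (a:ℝ) * ((a:ℝ) - (k:ℝ)) / k + ((a % k : ℕ):ℝ) * ((k:ℝ) - ((a % k : ℕ):ℝ)) / k
        + ((a:ℝ) - 1) := by
  have hk0 : (0:ℝ) < k := by exact_mod_cast hk
  have hk1 : (0:ℝ) < (k:ℝ) + 1 := by linarith
  set q : ℕ := a / k with hq
  set r : ℕ := a % k with hr
  have hqr : k * q + r = a := Nat.div_add_mod a k
  have hrk : r < k := Nat.mod_lt _ hk
  have key := intkey_lt (k:ℤ) (q:ℤ) (r:ℤ) (by exact_mod_cast hk) (by positivity)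
    (by exact_mod_cast hrk) (by positivity)
    (by have : 2 ≤ k*q+r := hqr ▸ ha; exact_mod_cast this)
  have keyR : ((k:ℝ)*q+r)*(((k:ℝ)*q+r)-1) < ((k:ℝ)+1)*((k:ℝ)*(q:ℝ)^2+2*q*r+r-1) := by
    exact_mod_cast key
  have haR : (a:ℝ) = (k:ℝ)*q + r := by exact_mod_cast hqr.symm
  rw [div_lt_iff₀ hk1]
  have hX : (a:ℝ) * ((a:ℝ) - (k:ℝ)) / k + ((a % k : ℕ):ℝ) * ((k:ℝ) - ((a % k : ℕ):ℝ)) / k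
      + ((a:ℝ) - 1)
      = ((a:ℝ) * ((a:ℝ) - (k:ℝ)) + (r:ℝ) * ((k:ℝ) - (r:ℝ)) + ((a:ℝ) - 1) * k) / k := by
    rw [← hr]; field_simp
  rw [hX, div_mul_eq_mul_div, lt_div_iff₀ hk0, haR]
  nlinarith [mul_pos hk0 (sub_pos.mpr keyR)]



/-- Lemma 4.5: for a partition `λ` of `N` with `λ₁ > 1`,
`∑ λᵢ(λᵢ-k)/k + R_k(λ)/k + N - l > ∑ λᵢ(λᵢ-1)/(k+1)`. -/
theorem stmt_4 (k N l : ℕ) (hk : 1 ≤ k) (hN : 2 ≤ N)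
    (lam : Fin l → ℕ)
    (hmono : ∀ i j : Fin l, i ≤ j → lam j ≤ lam i)
    (hpos : ∀ i, 0 < lam i)
    (hsum : ∑ i, lam i = N)
    (hl : 0 < l) (h1 : 1 < lam ⟨0, hl⟩) :
    (∑ i, (lam i : ℝ) * ((lam i : ℝ) - (k : ℝ)) / k)
      + (∑ i, ((lam i % k : ℕ) : ℝ) * ((k : ℝ) - ((lam i % k : ℕ) : ℝ))) / k
      + (N : ℝ) - (l : ℝ)
      > ∑ i, (lam i : ℝ) * ((lam i : ℝ) - 1) / ((k : ℝ) + 1) := by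
  have hsN : (∑ i, (lam i : ℝ)) = (N:ℝ) := by
    rw [← hsum]; push_cast; rfl
  have hsplit : (∑ i, (lam i : ℝ) * ((lam i : ℝ) - (k : ℝ)) / k)
      + (∑ i, ((lam i % k : ℕ) : ℝ) * ((k : ℝ) - ((lam i % k : ℕ) : ℝ))) / k
      + (N : ℝ) - (l : ℝ)
      = ∑ i, ((lam i : ℝ) * ((lam i : ℝ) - (k : ℝ)) / k
          + ((lam i % k : ℕ) : ℝ) * ((k : ℝ) - ((lam i % k : ℕ) : ℝ)) / k
          + ((lam i : ℝ) - 1)) := by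
    have h1s : ∑ i, ((lam i : ℝ) - 1) = (N:ℝ) - l := by
      rw [Finset.sum_sub_distrib, Finset.sum_const, hsN, Finset.card_univ, Fintype.card_fin,
        nsmul_eq_mul, mul_one]
    rw [Finset.sum_add_distrib, Finset.sum_add_distrib, h1s, Finset.sum_div]
    ring
  rw [gt_iff_lt, hsplit]
  apply Finset.sum_lt_sum
  · intro i _
    exact realkey_le k (lam i) hk (hpos i)
  · exact ⟨⟨0, hl⟩, Finset.mem_univ _, realkey_lt k (lam ⟨0, hl⟩) hk h1⟩
end

section
/- Fix an integer k ≥ 2 and a positive integer N. The ideal J_k of ℂ[x_1,...,x_N] consisting of polynomials vanishing on every coordinate subspace x_{i_1} = ... = x_{i_{k+1}} = 0 (for all 1 ≤ i_1 < ... < i_{k+1} ≤ N, where 0 ≤ k ≤ N-1) is generated by the polynomials σ(x_1 · x_2 · ... · x_{N-k}) for σ ranging over the symmetric group S_N acting by permutation of variables. -/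
/-!
A polynomial over an infinite domain vanishes on the coordinate subspace `{x_i = 0, i ∈ S}`
iff it lies in the monomial ideal `(x_i : i ∈ S)`, i.e. iff each of its monomials involves a
variable of `S`. Requiring this for every `S` with `k + 1` elements says that every monomial
involves at least `N - k` variables, which is exactly membership in the monomial ideal spanned by
the squarefree monomials of degree `N - k`; these form a single orbit under `S_N`.
-/

open Finset MvPolynomial
open scoped Pointwise

theorem Finset.exists_perm_smul_eq_of_card_eq {α : Type*} [DecidableEq α] {A T : Finset α}
    (h : #A = #T) : ∃ e : Equiv.Perm α, e • A = T := by
  have := Set.powersetCard.isPretransitive (α := α) (n := #T)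
  obtain ⟨e, he⟩ := MulAction.exists_smul_eq (Equiv.Perm α)
    (⟨A, h⟩ : Set.powersetCard α #T) ⟨T, rfl⟩
  exact ⟨e, congrArg Subtype.val he⟩

theorem Finset.forall_card_eq_not_disjoint_iff {α : Type*} [Fintype α] (U : Finset α) (n : ℕ) :
    (∀ S : Finset α, #S = n + 1 → ¬Disjoint S U) ↔ Fintype.card α - n ≤ #U := by
  classical
  constructor
  · intro h
    by_contra! hU
    obtain ⟨S, hSU, hS⟩ := exists_subset_card_eq (s := Uᶜ) (n := n + 1)
      (by rw [card_compl]; omega)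
    exact h S hS (subset_compl_iff_disjoint_right.mp hSU)
  · intro hU S hS hSU
    have := card_union_of_disjoint hSU
    have := card_le_univ (S ∪ U)
    omega

theorem Finsupp.indicator_one_le_iff {α : Type*} {T : Finset α} {d : α →₀ ℕ} :
    Finsupp.indicator T (fun _ _ => 1) ≤ d ↔ T ⊆ d.support := by
  classical
  simp only [Finsupp.le_def, Finsupp.indicator_apply, subset_iff, Finsupp.mem_support_iff]
  refine forall_congr' fun i => ?_
  by_cases hi : i ∈ T <;> simp [hi, Nat.one_le_iff_ne_zero]

namespace MvPolynomial

variable {σ R : Type*}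

section CommSemiring

variable [CommSemiring R]

theorem rename_prod_X [DecidableEq σ] (e : Equiv.Perm σ) (A : Finset σ) :
    rename e (∏ i ∈ A, (X i : MvPolynomial σ R)) = ∏ i ∈ e • A, X i := by
  rw [map_prod, smul_finset_def, prod_image (MulAction.injective e).injOn]
  simp only [rename_X, Equiv.Perm.smul_def]

theorem setOf_exists_perm_eq_rename_prod_X [DecidableEq σ] (A : Finset σ) :
    {q | ∃ e : Equiv.Perm σ, q = rename e (∏ i ∈ A, (X i : MvPolynomial σ R))} =
      {q | ∃ T : Finset σ, #T = #A ∧ q = ∏ i ∈ T, X i} := by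
  ext q
  constructor
  · rintro ⟨e, rfl⟩
    exact ⟨e • A, card_smul_finset e A, rename_prod_X e A⟩
  · rintro ⟨T, hT, rfl⟩
    obtain ⟨e, rfl⟩ := exists_perm_smul_eq_of_card_eq hT.symm
    exact ⟨e, (rename_prod_X e A).symm⟩

theorem prod_X_eq_monomial_indicator (T : Finset σ) :
    ∏ i ∈ T, (X i : MvPolynomial σ R) = monomial (Finsupp.indicator T fun _ _ => 1) 1 := by
  simpa using prod_X_pow (R := R) 1 T

theorem mem_span_prod_X_iff (m : ℕ) {p : MvPolynomial σ R} :
    p ∈ Ideal.span {q | ∃ T : Finset σ, #T = m ∧ q = ∏ i ∈ T, X i} ↔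
      ∀ d ∈ p.support, m ≤ #d.support := by
  have hgen : {q | ∃ T : Finset σ, #T = m ∧ q = ∏ i ∈ T, X i} =
      (fun s => monomial s (1 : R)) ''
        {s | ∃ T : Finset σ, #T = m ∧ s = Finsupp.indicator T fun _ _ => 1} := by
    ext q
    simp only [Set.mem_ofPred_eq, Set.mem_image, prod_X_eq_monomial_indicator]
    constructor
    · rintro ⟨T, hT, rfl⟩
      exact ⟨_, ⟨T, hT, rfl⟩, rfl⟩
    · rintro ⟨_, ⟨T, hT, rfl⟩, rfl⟩
      exact ⟨T, hT, rfl⟩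
  rw [hgen, mem_ideal_span_monomial_image]
  refine forall₂_congr fun d _ => ⟨?_, fun hm => ?_⟩
  · rintro ⟨_, ⟨T, rfl, rfl⟩, hT⟩
    exact card_le_card (Finsupp.indicator_one_le_iff.mp hT)
  · obtain ⟨T, hT, rfl⟩ := exists_subset_card_eq hm
    exact ⟨_, ⟨T, rfl, rfl⟩, Finsupp.indicator_one_le_iff.mpr hT⟩

end CommSemiring

theorem mem_span_X_image_iff_forall_eval_eq_zero [CommRing R] [IsDomain R] [Infinite R]
    {S : Set σ} {p : MvPolynomial σ R} :
    p ∈ Ideal.span (X '' S) ↔ ∀ x : σ → R, (∀ i ∈ S, x i = 0) → eval x p = 0 := by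
  classical
  constructor
  · intro hp x hx
    suffices Ideal.span (X '' S) ≤ RingHom.ker (eval x) from this hp
    rw [Ideal.span_le]
    rintro _ ⟨i, hi, rfl⟩
    simp [hx i hi]
  · intro hp
    set I := Ideal.span (X '' S : Set (MvPolynomial σ R))
    -- `κ` sets the variables of `S` to zero; it is the identity modulo `I`, and `κ p = 0`.
    let κ : MvPolynomial σ R →ₐ[R] MvPolynomial σ R := aeval (Sᶜ.indicator X)
    have hκ : (Ideal.Quotient.mkₐ R I).comp κ = Ideal.Quotient.mkₐ R I := by
      refine algHom_ext fun i => ?_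
      by_cases hi : i ∈ S
      · simpa [κ, hi, eq_comm] using
          Ideal.Quotient.eq_zero_iff_mem.mpr (Ideal.subset_span ⟨i, hi, rfl⟩ : X i ∈ I)
      · simp [κ, hi]
    have hκp : κ p = 0 := funext fun x => by
      have hx : eval (Sᶜ.indicator x) p = 0 := hp _ fun i hi => by simp [hi]
      rw [map_zero, ← hx, ← aeval_eq_eval, ← aeval_eq_eval, ← AlgHom.comp_apply, comp_aeval]
      congr 2
      funext i
      by_cases hi : i ∈ S <;> simp [hi]
    have := congrArg (· p) hκ
    exact Ideal.Quotient.eq_zero_iff_mem.mp (by simpa [hκp, eq_comm] using this)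

end MvPolynomial

theorem stmt_10_general (N k : ℕ) :
    (Ideal.span {q : MvPolynomial (Fin N) ℂ | ∃ σ : Equiv.Perm (Fin N),
        q = MvPolynomial.rename σ
          (∏ i ∈ Finset.univ.filter (fun i : Fin N => (i : ℕ) < N - k),
            MvPolynomial.X i)} : Set (MvPolynomial (Fin N) ℂ))
    = {p : MvPolynomial (Fin N) ℂ |
        ∀ S : Finset (Fin N), S.card = k + 1 →
        ∀ x : Fin N → ℂ, (∀ i ∈ S, x i = 0) → MvPolynomial.eval x p = 0} := by
  have hcard : #(univ.filter fun i : Fin N => (i : ℕ) < N - k) = N - k := by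
    simp [Fin.card_filter_val_lt]
  ext p
  calc _ ↔ ∀ d ∈ p.support, Fintype.card (Fin N) - k ≤ #d.support := by
        rw [SetLike.mem_coe, setOf_exists_perm_eq_rename_prod_X, hcard, mem_span_prod_X_iff,
          Fintype.card_fin]
    _ ↔ ∀ S : Finset (Fin N), #S = k + 1 → p ∈ Ideal.span (X '' (S : Set (Fin N))) := by
        simp only [← forall_card_eq_not_disjoint_iff, mem_ideal_span_X_image, not_disjoint_iff,
          Finsupp.mem_support_iff, Finset.mem_coe]
        exact ⟨fun h S hS d hd => h d hd S hS, fun h d hd S hS => h S hS d hd⟩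
    _ ↔ _ := by
        simp only [mem_span_X_image_iff_forall_eval_eq_zero, Finset.mem_coe]
        rfl

/-- Proposition 2.5: the ideal `J_k ⊂ ℂ[x₁,…,x_N]` of polynomials vanishing on
every coordinate subspace `x_{i₁} = … = x_{i_{k+1}} = 0` is generated by the
`S_N`-images of `x₁ ⋯ x_{N-k}`. -/
theorem stmt_10 (N k : ℕ) (hN : 0 < N) (hk : 2 ≤ k) (hkN : k ≤ N - 1) :
    (Ideal.span {q : MvPolynomial (Fin N) ℂ | ∃ σ : Equiv.Perm (Fin N),
        q = MvPolynomial.rename σ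
          (∏ i ∈ Finset.univ.filter (fun i : Fin N => (i : ℕ) < N - k),
            MvPolynomial.X i)} : Set (MvPolynomial (Fin N) ℂ))
    = {p : MvPolynomial (Fin N) ℂ |
        ∀ S : Finset (Fin N), S.card = k + 1 →
        ∀ x : Fin N → ℂ, (∀ i ∈ S, x i = 0) → MvPolynomial.eval x p = 0} :=
  stmt_10_general N k
end

section
/- Let N ≥ 2, z ≥ 0 an integer, λ a partition of N - z with l parts, and let r be an integer with N/2 < r < N. If z > 0 or λ_1 > 1, then z(z-1)/(2r) + Σ_i λ_i(λ_i - 1)/(4r) < (N - l)/2 + max(0, z - r). -/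
/-!
Each part `a` of `λ` satisfies `1 ≤ a < 2r`, so `(a - 1)(a - 2r) ≤ 0`, i.e.
`a(a-1)/(4r) ≤ (a-1)/2`, strictly when `a > 1`; summing over the parts gives the bound
`(N - z - l)/2`. Likewise `0 ≤ z < 2r` gives `z(z-1)/(2r) ≤ z/2 + max(0, z - r)`,
strictly when `z > 0`: for `z ≤ r` because `z - 1 < r`, and for `z > r` because
`(z - r)(z - 2r) ≤ 0 < z`.
-/

open Finset

section

variable {r : ℝ}

theorem mul_pred_div_four_mul_le (hr : 0 < r) {a : ℝ} (h1 : 1 ≤ a) (h2 : a ≤ 2 * r) :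
    a * (a - 1) / (4 * r) ≤ (a - 1) / 2 := by
  rw [div_le_div_iff₀ (by positivity) two_pos]
  nlinarith

theorem mul_pred_div_four_mul_lt (hr : 0 < r) {a : ℝ} (h1 : 1 < a) (h2 : a < 2 * r) :
    a * (a - 1) / (4 * r) < (a - 1) / 2 := by
  rw [div_lt_div_iff₀ (by positivity) two_pos]
  nlinarith

theorem mul_pred_div_two_mul_le (hr : 0 < r) {z : ℝ} (h0 : 0 ≤ z) (h2 : z ≤ 2 * r) :
    z * (z - 1) / (2 * r) ≤ z / 2 + max 0 (z - r) := by
  rw [div_le_iff₀ (by positivity)]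
  rcases le_total z r with hzr | hzr
  · rw [max_eq_left (by linarith)]
    nlinarith
  · rw [max_eq_right (by linarith)]
    nlinarith

theorem mul_pred_div_two_mul_lt (hr : 0 < r) {z : ℝ} (h0 : 0 < z) (h2 : z < 2 * r) :
    z * (z - 1) / (2 * r) < z / 2 + max 0 (z - r) := by
  rw [div_lt_iff₀ (by positivity)]
  rcases le_total z r with hzr | hzr
  · rw [max_eq_left (by linarith)]
    nlinarith
  · rw [max_eq_right (by linarith)]
    nlinarith

variable {ι : Type*} [Fintype ι] {a : ι → ℝ}

theorem sum_pred_div_two (a : ι → ℝ) :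
    ∑ i, (a i - 1) / 2 = ((∑ i, a i) - Fintype.card ι) / 2 := by
  simp [← Finset.sum_div, Finset.sum_sub_distrib]

theorem sum_mul_pred_div_four_mul_le (hr : 0 < r) (h1 : ∀ i, 1 ≤ a i) (h2 : ∀ i, a i ≤ 2 * r) :
    ∑ i, a i * (a i - 1) / (4 * r) ≤ ((∑ i, a i) - Fintype.card ι) / 2 := by
  rw [← sum_pred_div_two]
  exact sum_le_sum fun i _ => mul_pred_div_four_mul_le hr (h1 i) (h2 i)

theorem sum_mul_pred_div_four_mul_lt (hr : 0 < r) (h1 : ∀ i, 1 ≤ a i) (h2 : ∀ i, a i < 2 * r)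
    {j : ι} (hj : 1 < a j) :
    ∑ i, a i * (a i - 1) / (4 * r) < ((∑ i, a i) - Fintype.card ι) / 2 := by
  rw [← sum_pred_div_two]
  exact sum_lt_sum (fun i _ => mul_pred_div_four_mul_le hr (h1 i) (h2 i).le)
    ⟨j, mem_univ j, mul_pred_div_four_mul_lt hr hj (h2 j)⟩

end

theorem stmt_16_general (N z l r : ℕ)
    (hr1 : N < 2 * r)
    (lam : Fin l → ℕ)
    (hpos : ∀ i, 0 < lam i)
    (hsum : (∑ i, lam i) + z = N)
    (hcond : 0 < z ∨ ∃ hl : 0 < l, 1 < lam ⟨0, hl⟩) :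
    (z : ℝ) * ((z : ℝ) - 1) / (2 * r)
      + ∑ i, (lam i : ℝ) * ((lam i : ℝ) - 1) / (4 * r)
      < ((N : ℝ) - l) / 2 + ((max 0 ((z : ℤ) - r) : ℤ) : ℝ) := by
  have hr : (0 : ℝ) < r := by exact_mod_cast (by omega : 0 < r)
  have hsumR : (∑ i, (lam i : ℝ)) + z = N := by exact_mod_cast hsum
  have hz : (z : ℝ) < 2 * r := by exact_mod_cast (by omega : z < 2 * r)
  have hpart1 : ∀ i, (1 : ℝ) ≤ lam i := fun i => by exact_mod_cast hpos i
  have hpart2 : ∀ i, (lam i : ℝ) < 2 * r := fun i => by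
    have := single_le_sum (fun j _ => Nat.zero_le (lam j)) (mem_univ i)
    exact_mod_cast (by omega : lam i < 2 * r)
  push_cast
  rcases hcond with hz0 | ⟨hl, hlam⟩
  · have hzero := mul_pred_div_two_mul_lt hr (Nat.cast_pos.mpr hz0) hz
    have hparts := sum_mul_pred_div_four_mul_le hr hpart1 fun i => (hpart2 i).le
    rw [Fintype.card_fin] at hparts
    linarith
  · have hzero := mul_pred_div_two_mul_le hr z.cast_nonneg hz.le
    have hparts := sum_mul_pred_div_four_mul_lt hr hpart1 hpart2
      (j := ⟨0, hl⟩) (by exact_mod_cast hlam)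
    rw [Fintype.card_fin] at hparts
    linarith

/-- Inequality (6.1) of Theorem 5.4. -/
theorem stmt_16 (N z l r : ℕ) (hN : 2 ≤ N) (hzN : z ≤ N)
    (hr1 : N < 2 * r) (hr2 : r < N)
    (lam : Fin l → ℕ)
    (hmono : ∀ i j : Fin l, i ≤ j → lam j ≤ lam i)
    (hpos : ∀ i, 0 < lam i)
    (hsum : (∑ i, lam i) + z = N)
    (hcond : 0 < z ∨ ∃ hl : 0 < l, 1 < lam ⟨0, hl⟩) :
    (z : ℝ) * ((z : ℝ) - 1) / (2 * r)
      + ∑ i, (lam i : ℝ) * ((lam i : ℝ) - 1) / (4 * r)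
      < ((N : ℝ) - l) / 2 + ((max 0 ((z : ℤ) - r) : ℤ) : ℝ) :=
  stmt_16_general N z l r hr1 lam hpos hsum hcond
end

section
/- Let r ≥ 2 and 0 ≤ s ≤ r - 1 be integers, N ≥ 2, z ≥ 1 an integer, and λ a partition of N - z with l parts. Then Σ_i λ_i(λ_i - (r-1))/(2(r-1)) + R_{r-1}(λ)/(2(r-1)) + z²/(r-1) - sz/(r-1) + (N - l)/2 > Σ_i λ_i(λ_i-1)/(2r) + z(z-1)/r + (1/2 - s/r)z. -/
open Finset BigOperators

lemma term_ineq (r a : ℕ) (hr : 2 ≤ r) (ha : 0 < a) :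
    (a : ℝ) * ((a : ℝ) - ((r : ℝ) - 1)) / (2 * ((r : ℝ) - 1))
      + ((a % (r - 1) : ℕ) : ℝ) * (((r : ℝ) - 1) - ((a % (r - 1) : ℕ) : ℝ)) / (2 * ((r : ℝ) - 1))
      + ((a : ℝ) - 1) / 2
      ≥ (a : ℝ) * ((a : ℝ) - 1) / (2 * r) := by
  set k : ℕ := r - 1 with hkdef
  have hk1 : 1 ≤ k := by omega
  have hρlt : a % k < k := Nat.mod_lt _ hk1
  -- key nat fact: a + (a % k) * (k - a % k) ≥ k
  have key : k ≤ a + (a % k) * (k - a % k) := by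
    rcases Nat.eq_zero_or_pos (a % k) with h0 | hpos'
    · have : k ∣ a := Nat.dvd_of_mod_eq_zero h0
      have := Nat.le_of_dvd ha this
      omega
    · have h1 : k - a % k ≤ (a % k) * (k - a % k) := Nat.le_mul_of_pos_left _ hpos'
      have h2 : a % k ≤ a := Nat.mod_le _ _
      omega
  -- move to reals
  have hkr : ((k : ℕ) : ℝ) = (r : ℝ) - 1 := by
    rw [hkdef]; push_cast [Nat.cast_sub (by omega : 1 ≤ r)]; ring
  have hρk : ((a % k : ℕ) : ℝ) * (((k : ℕ) : ℝ) - ((a % k : ℕ) : ℝ))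
      = ((a % k) * (k - a % k) : ℕ) := by
    push_cast [Nat.cast_sub hρlt.le]; ring
  have keyR : ((k : ℕ) : ℝ) ≤ (a : ℝ) + ((a % k : ℕ) : ℝ) * (((k : ℕ) : ℝ) - ((a % k : ℕ) : ℝ)) := by
    rw [hρk]
    exact_mod_cast key
  have hkpos : (0 : ℝ) < ((k : ℕ) : ℝ) := by exact_mod_cast hk1
  have hrpos : (0 : ℝ) < (r : ℝ) := by positivity
  have hkler : ((k : ℕ) : ℝ) ≤ (r : ℝ) := by exact_mod_cast (by omega : k ≤ r)
  have ha1 : (1 : ℝ) ≤ (a : ℝ) := by exact_mod_cast ha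
  rw [← hkr, ge_iff_le]
  set K : ℝ := ((k : ℕ) : ℝ)
  set A : ℝ := (a : ℝ)
  set P : ℝ := ((a % k : ℕ) : ℝ)
  have hPnn : 0 ≤ P := by positivity
  have hLHS : A * (A - K) / (2 * K) + P * (K - P) / (2 * K) + (A - 1) / 2
      = (A ^ 2 - K + P * (K - P)) / (2 * K) := by
    field_simp; ring
  rw [hLHS, div_le_div_iff₀ (by positivity) (by positivity)]
  have hAnn : (0:ℝ) ≤ A := by linarith
  nlinarith [mul_nonneg (mul_nonneg hAnn (sub_nonneg.2 ha1)) (sub_nonneg.2 hkler),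
    mul_nonneg (sub_nonneg.2 keyR) hrpos.le,
    mul_nonneg (mul_nonneg hAnn (sub_nonneg.2 ha1)) hkpos.le]

/-- The combined inequality from the proof of Theorem 5.5 (case `z > 0`). -/
theorem stmt_17 (N z l r s : ℕ) (hr : 2 ≤ r) (hs : s ≤ r - 1)
    (hN : 2 ≤ N) (hz : 1 ≤ z) (hzN : z ≤ N)
    (lam : Fin l → ℕ)
    (hmono : ∀ i j : Fin l, i ≤ j → lam j ≤ lam i)
    (hpos : ∀ i, 0 < lam i)
    (hsum : (∑ i, lam i) + z = N) :
    (∑ i, (lam i : ℝ) * ((lam i : ℝ) - ((r : ℝ) - 1)) / (2 * ((r : ℝ) - 1)))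
      + (∑ i, ((lam i % (r - 1) : ℕ) : ℝ)
          * (((r : ℝ) - 1) - ((lam i % (r - 1) : ℕ) : ℝ))) / (2 * ((r : ℝ) - 1))
      + (z : ℝ) ^ 2 / ((r : ℝ) - 1) - (s : ℝ) * z / ((r : ℝ) - 1)
      + ((N : ℝ) - l) / 2
      > (∑ i, (lam i : ℝ) * ((lam i : ℝ) - 1) / (2 * r))
        + (z : ℝ) * ((z : ℝ) - 1) / r
        + (1 / 2 - (s : ℝ) / r) * z := by
  have hk : (1 : ℝ) ≤ (r : ℝ) - 1 := by
    have : (2 : ℝ) ≤ (r : ℝ) := by exact_mod_cast hr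
    linarith
  have hkpos : (0 : ℝ) < (r : ℝ) - 1 := by linarith
  have hrpos : (0 : ℝ) < (r : ℝ) := by linarith
  have hz1 : (1 : ℝ) ≤ (z : ℝ) := by exact_mod_cast hz
  have hsR : (s : ℝ) ≤ (r : ℝ) - 1 := by
    have : (s : ℝ) ≤ ((r - 1 : ℕ) : ℝ) := by exact_mod_cast hs
    rwa [Nat.cast_sub (by omega : 1 ≤ r), Nat.cast_one] at this
  -- z-part strict inequality
  have hzpart : (z : ℝ) ^ 2 / ((r : ℝ) - 1) - (s : ℝ) * z / ((r : ℝ) - 1) + (z : ℝ) / 2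
      > (z : ℝ) * ((z : ℝ) - 1) / r + (1 / 2 - (s : ℝ) / r) * z := by
    rw [gt_iff_lt, ← sub_pos]
    have heq : (z : ℝ) ^ 2 / ((r : ℝ) - 1) - (s : ℝ) * z / ((r : ℝ) - 1) + (z : ℝ) / 2
        - ((z : ℝ) * ((z : ℝ) - 1) / r + (1 / 2 - (s : ℝ) / r) * z)
        = (z : ℝ) * ((z : ℝ) - (s : ℝ) + ((r : ℝ) - 1)) / (((r : ℝ) - 1) * r) := by
      field_simp; ring
    rw [heq]
    have : (0 : ℝ) < (z : ℝ) - (s : ℝ) + ((r : ℝ) - 1) := by linarith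
    positivity
  -- sum part
  have hsumpart : ∑ i, ((lam i : ℝ) * ((lam i : ℝ) - ((r : ℝ) - 1)) / (2 * ((r : ℝ) - 1))
        + ((lam i % (r - 1) : ℕ) : ℝ) * (((r : ℝ) - 1) - ((lam i % (r - 1) : ℕ) : ℝ)) / (2 * ((r : ℝ) - 1))
        + ((lam i : ℝ) - 1) / 2)
      ≥ ∑ i, (lam i : ℝ) * ((lam i : ℝ) - 1) / (2 * r) :=
    Finset.sum_le_sum fun i _ => term_ineq r (lam i) hr (hpos i)
  -- rewrite (N - l)/2
  have hNs : (N : ℝ) = (∑ i, (lam i : ℝ)) + (z : ℝ) := by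
    have := hsum; push_cast [← this]; ring
  have hNl : ((N : ℝ) - l) / 2 = (∑ i, (((lam i : ℝ) - 1) / 2)) + (z : ℝ) / 2 := by
    have h1 : ∑ i, (((lam i : ℝ) - 1) / 2) = ((∑ i, (lam i : ℝ)) - l) / 2 := by
      rw [← Finset.sum_div, Finset.sum_sub_distrib, Finset.sum_const, Finset.card_univ,
        Fintype.card_fin, nsmul_eq_mul, mul_one]
    rw [h1, hNs]; ring
  rw [Finset.sum_add_distrib, Finset.sum_add_distrib] at hsumpart
  rw [Finset.sum_div]
  linarith [hsumpart, hzpart, hNl.ge, hNl.le]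
end

section
/- Let N ≥ 3 and let λ be a partition of N - z (z ≥ 0 an integer, with λ_1 ≥ 2 if z = 0) with l parts. Then Σ_i λ_i² - 4 Σ_i λ_i + 3 R_2(λ) + 6 ρ_2(z)(2 - ρ_2(z)) + 2z² - 8z + 6(N - l) > 0, where R_2(λ) = Σ_i ρ_2(λ_i)(2 - ρ_2(λ_i)) and ρ_2 denotes the residue modulo 2. -/
open Finset BigOperators

def auxF (a : ℕ) : ℤ :=
  (a : ℤ) ^ 2 + 2 * a + 3 * ((a % 2 : ℕ) : ℤ) * (2 - ((a % 2 : ℕ) : ℤ)) - 6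

lemma auxF_nonneg {a : ℕ} (ha : 1 ≤ a) : 0 ≤ auxF a := by
  rcases Nat.even_or_odd a with h | h
  · have h2 : a % 2 = 0 := Nat.even_iff.mp h
    have ha2 : 2 ≤ a := by omega
    have : (2 : ℤ) ≤ a := by exact_mod_cast ha2
    simp only [auxF, h2]
    push_cast
    nlinarith
  · have h2 : a % 2 = 1 := Nat.odd_iff.mp h
    have : (1 : ℤ) ≤ a := by exact_mod_cast ha
    simp only [auxF, h2]
    push_cast
    nlinarith

lemma auxF_two {a : ℕ} (ha : 2 ≤ a) : 2 ≤ auxF a := by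
  rcases Nat.even_or_odd a with h | h
  · have h2 : a % 2 = 0 := Nat.even_iff.mp h
    have : (2 : ℤ) ≤ a := by exact_mod_cast ha
    simp only [auxF, h2]
    push_cast
    nlinarith
  · have h2 : a % 2 = 1 := Nat.odd_iff.mp h
    have ha3 : 3 ≤ a := by omega
    have : (3 : ℤ) ≤ a := by exact_mod_cast ha3
    simp only [auxF, h2]
    push_cast
    nlinarith

def auxG (z : ℕ) : ℤ :=
  2 * (z : ℤ) ^ 2 - 2 * z + 6 * ((z % 2 : ℕ) : ℤ) * (2 - ((z % 2 : ℕ) : ℤ))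

lemma auxG_nonneg (z : ℕ) : 0 ≤ auxG z := by
  rcases Nat.even_or_odd z with h | h
  · have h2 : z % 2 = 0 := Nat.even_iff.mp h
    have : (0 : ℤ) ≤ z := by positivity
    rcases Nat.eq_zero_or_pos z with hz | hz
    · simp [auxG, hz]
    · have : (1 : ℤ) ≤ z := by exact_mod_cast hz
      simp only [auxG, h2]
      push_cast
      nlinarith
  · have h2 : z % 2 = 1 := Nat.odd_iff.mp h
    have : (1 : ℤ) ≤ z := by exact_mod_cast Nat.one_le_iff_ne_zero.mpr (by omega)
    simp only [auxG, h2]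
    push_cast
    nlinarith

lemma auxG_pos {z : ℕ} (hz : 1 ≤ z) : 0 < auxG z := by
  rcases Nat.even_or_odd z with h | h
  · have h2 : z % 2 = 0 := Nat.even_iff.mp h
    have hz2 : 2 ≤ z := by omega
    have : (2 : ℤ) ≤ z := by exact_mod_cast hz2
    simp only [auxG, h2]
    push_cast
    nlinarith
  · have h2 : z % 2 = 1 := Nat.odd_iff.mp h
    have : (1 : ℤ) ≤ z := by exact_mod_cast hz
    simp only [auxG, h2]
    push_cast
    nlinarith

/-- The key inequality in the proof of Proposition 5.8 (unitarity at `c = 1/3`). -/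
theorem stmt_19 (N z l : ℕ) (hN : 3 ≤ N) (hzN : z ≤ N)
    (lam : Fin l → ℕ)
    (hmono : ∀ i j : Fin l, i ≤ j → lam j ≤ lam i)
    (hpos : ∀ i, 0 < lam i)
    (hsum : (∑ i, lam i) + z = N)
    (hz0 : z = 0 → ∃ hl : 0 < l, 2 ≤ lam ⟨0, hl⟩) :
    (∑ i, (lam i : ℤ) ^ 2) - 4 * (∑ i, (lam i : ℤ))
      + 3 * (∑ i, ((lam i % 2 : ℕ) : ℤ) * (2 - ((lam i % 2 : ℕ) : ℤ)))
      + 6 * ((z % 2 : ℕ) : ℤ) * (2 - ((z % 2 : ℕ) : ℤ))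
      + 2 * (z : ℤ) ^ 2 - 8 * (z : ℤ) + 6 * ((N : ℤ) - l) > 0 := by
  have hNcast : (N : ℤ) = (∑ i, (lam i : ℤ)) + z := by
    have := hsum
    push_cast [← this]
    ring
  have hsumF : ∑ i, auxF (lam i)
      = (∑ i, (lam i : ℤ) ^ 2) + 2 * (∑ i, (lam i : ℤ))
        + 3 * (∑ i, ((lam i % 2 : ℕ) : ℤ) * (2 - ((lam i % 2 : ℕ) : ℤ)))
        - 6 * l := by
    simp only [auxF, Finset.sum_add_distrib, Finset.sum_sub_distrib, Finset.mul_sum,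
      Finset.sum_const, Finset.card_univ, Fintype.card_fin, nsmul_eq_mul, mul_assoc,
      ← Finset.mul_sum]
    ring
  have key : (∑ i, (lam i : ℤ) ^ 2) - 4 * (∑ i, (lam i : ℤ))
      + 3 * (∑ i, ((lam i % 2 : ℕ) : ℤ) * (2 - ((lam i % 2 : ℕ) : ℤ)))
      + 6 * ((z % 2 : ℕ) : ℤ) * (2 - ((z % 2 : ℕ) : ℤ))
      + 2 * (z : ℤ) ^ 2 - 8 * (z : ℤ) + 6 * ((N : ℤ) - l)
      = (∑ i, auxF (lam i)) + auxG z := by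
    rw [hsumF, hNcast, auxG]
    ring
  rw [key]
  rcases Nat.eq_zero_or_pos z with hz | hz
  · obtain ⟨hl, h2⟩ := hz0 hz
    have hG : auxG z = 0 := by simp [auxG, hz]
    have hsum2 : (2 : ℤ) ≤ ∑ i, auxF (lam i) := by
      calc (2 : ℤ) ≤ auxF (lam ⟨0, hl⟩) := auxF_two h2
        _ ≤ ∑ i, auxF (lam i) := by
          apply Finset.single_le_sum (fun i _ => auxF_nonneg (hpos i)) (Finset.mem_univ _)
    linarith
  · have hF : 0 ≤ ∑ i, auxF (lam i) :=
      Finset.sum_nonneg fun i _ => auxF_nonneg (hpos i)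
    have hG : 0 < auxG z := auxG_pos hz
    linarith
end
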